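/- arXiv:1404.3623 — 2 statements merged into one kernel-verified Lean document; each statement's English description precedes it below -/
import Mathlib

section
/- For all λ ≥ 1 and all s > 0, g_λ(s) ≤ (1 + ln λ) · [(1+s) + (1+s)ln(1+s)]. -/
noncomputable def g (lam s : ℝ) : ℝ :=
  if 0 ≤ s then (1 / lam) * (1 + lam * s) * Real.log (1 + lam * s) - s else 0

theorem stmt_2 (lam : ℝ) (hlam : 1 ≤ lam) (s : ℝ) (hs : 0 < s) :
    g lam s ≤ (1 + Real.log lam) * ((1 + s) + (1 + s) * Real.log (1 + s)) := by
  have hlam0 : 0 < lam := lt_of_lt_of_le one_pos hlam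
  have hs0 : 0 ≤ s := hs.le
  have hlog_lam : 0 ≤ Real.log lam := Real.log_nonneg hlam
  have hlog_s : 0 ≤ Real.log (1 + s) := Real.log_nonneg (by linarith)
  have hL1 : 0 ≤ Real.log (1 + lam * s) :=
    Real.log_nonneg (by nlinarith)
  have h1 : 1 + lam * s ≤ lam * (1 + s) := by nlinarith
  have h2 : Real.log (1 + lam * s) ≤ Real.log lam + Real.log (1 + s) := by
    rw [← Real.log_mul (ne_of_gt hlam0) (by linarith)]
    exact Real.log_le_log (by nlinarith) h1
  have h3 : (1 / lam) * (1 + lam * s) ≤ 1 + s := by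
    rw [div_mul_eq_mul_div, one_mul, div_le_iff₀ hlam0]
    nlinarith
  have h4 : 0 ≤ (1 / lam) * (1 + lam * s) := by positivity
  have h5 : (1 / lam) * (1 + lam * s) * Real.log (1 + lam * s)
      ≤ (1 + s) * (Real.log lam + Real.log (1 + s)) :=
    mul_le_mul h3 h2 hL1 (by linarith)
  unfold g
  rw [if_pos hs0]
  nlinarith [mul_nonneg (mul_nonneg hlog_lam (by linarith : (0:ℝ) ≤ 1 + s)) hlog_s]
end

section
/- For every λ ≥ 1 and s > 0, (1/λ)(1+λs)ln(λ(1+s)) ≤ (1+ln λ)[(1+s) + (1+s)ln(1+s)], and consequently g_λ(s) ≤ (1+ln λ)[(1+s) + (1+s)ln(1+s)]. -/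
theorem stmt_19 (lam s : ℝ) (hlam : 1 ≤ lam) (hs : 0 < s) :
    (1 / lam) * (1 + lam * s) * Real.log (lam * (1 + s)) ≤
      (1 + Real.log lam) * ((1 + s) + (1 + s) * Real.log (1 + s)) ∧
    g lam s ≤ (1 + Real.log lam) * ((1 + s) + (1 + s) * Real.log (1 + s)) := by
  have hl0 : (0:ℝ) < lam := lt_of_lt_of_le one_pos hlam
  have hA : (0:ℝ) < 1 + lam * s := by nlinarith
  have h1s : (0:ℝ) < 1 + s := by linarith
  have hle : 1 + lam * s ≤ lam * (1 + s) := by nlinarith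
  have hlog : Real.log (lam * (1 + s)) = Real.log lam + Real.log (1 + s) :=
    Real.log_mul (ne_of_gt hl0) (ne_of_gt h1s)
  have hL1 : 0 ≤ Real.log lam := Real.log_nonneg hlam
  have hL2 : 0 ≤ Real.log (1 + s) := Real.log_nonneg (by linarith)
  have hc : (1 / lam) * (1 + lam * s) ≤ 1 + s := by
    rw [div_mul_eq_mul_div, div_le_iff₀ hl0]
    nlinarith
  have hc0 : 0 ≤ (1 / lam) * (1 + lam * s) := by positivity
  have key : (1 / lam) * (1 + lam * s) * Real.log (lam * (1 + s)) ≤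
      (1 + Real.log lam) * ((1 + s) + (1 + s) * Real.log (1 + s)) := by
    rw [hlog]
    nlinarith [mul_nonneg hL1 hL2, mul_le_mul_of_nonneg_right hc (add_nonneg hL1 hL2),
      mul_nonneg (mul_nonneg hL1 hL2) h1s.le]
  refine ⟨key, ?_⟩
  have hg : g lam s = (1 / lam) * (1 + lam * s) * Real.log (1 + lam * s) - s := by
    simp [g, hs.le]
  rw [hg]
  have hmono : Real.log (1 + lam * s) ≤ Real.log (lam * (1 + s)) :=
    Real.log_le_log hA hle
  have := mul_le_mul_of_nonneg_left hmono hc0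
  linarith
end
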